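/- (Miranda's theorem, n = 2) Let H = (H_1, H_2): [r,R]^2 → R^2 be continuous with H_1(r,s) > 0 and H_1(R,s) < 0 for all s ∈ [r,R], and H_2(t,r) > 0 and H_2(t,R) < 0 for all t ∈ [r,R]. Then there exists (t,s) ∈ [r,R]^2 with H(t,s) = (0,0). -/

import Mathlib

/-!
If `H` had no zero on the square, `H₁ + i H₂` would have a continuous logarithm there (the square
is simply connected), hence a continuous argument `θ`. The sign conditions on the four faces force
`θ` to increase strictly along each face, traversed counterclockwise, so going once around the
boundary would strictly increase the single-valued function `θ`.
-/

open Set Real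

namespace Complex

theorem exp_re_pos_iff (w : ℂ) : 0 < (exp w).re ↔ 0 < Real.cos w.im := by
  rw [exp_re, mul_pos_iff_of_pos_left (Real.exp_pos _)]

theorem exp_re_neg_iff (w : ℂ) : (exp w).re < 0 ↔ Real.cos w.im < 0 := by
  rw [exp_re, ← neg_pos, ← mul_neg, mul_pos_iff_of_pos_left (Real.exp_pos _), neg_pos]

theorem exp_im_pos_iff (w : ℂ) : 0 < (exp w).im ↔ 0 < Real.sin w.im := by
  rw [exp_im, mul_pos_iff_of_pos_left (Real.exp_pos _)]

theorem exp_im_neg_iff (w : ℂ) : (exp w).im < 0 ↔ Real.sin w.im < 0 := by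
  rw [exp_im, ← neg_pos, ← mul_neg, mul_pos_iff_of_pos_left (Real.exp_pos _), neg_pos]

end Complex

theorem Convex.exists_continuousOn_exp_eq {E : Type*} [AddCommGroup E] [TopologicalSpace E]
    [IsTopologicalAddGroup E] [Module ℝ E] [ContinuousSMul ℝ E] [LocallyConvexSpace ℝ E]
    {S : Set E} (hS : Convex ℝ S) {f : E → ℂ} (hf : ContinuousOn f S) (h0 : ∀ x ∈ S, f x ≠ 0) :
    ∃ L : E → ℂ, ContinuousOn L S ∧ ∀ x ∈ S, Complex.exp (L x) = f x := by
  rcases S.eq_empty_or_nonempty with rfl | ⟨x₀, hx₀⟩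
  · exact ⟨f, continuousOn_empty f, fun x hx => hx.elim⟩
  have := hS.contractibleSpace ⟨x₀, hx₀⟩
  have := hS.locallyPathConnectedSpace
  obtain ⟨F, ⟨-, hF⟩, -⟩ := Complex.isCoveringMapOn_exp.existsUnique_continuousMap_lifts
    ⟨S.domRestrict f, hf.domRestrict⟩ (a₀ := ⟨x₀, hx₀⟩) (Complex.exp_log (h0 x₀ hx₀))
    fun x => h0 x x.2
  classical
  refine ⟨fun x => if hx : x ∈ S then F ⟨x, hx⟩ else 0, ?_, fun x hx => ?_⟩
  · rw [continuousOn_iff_continuous_domRestrict]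
    convert F.continuous using 1
    ext x
    simp [x.2]
  · simpa [hx] using congrFun hF ⟨x, hx⟩

theorem Real.antitoneOn_cos_of_sin_pos {J : Set ℝ} (hJ : Convex ℝ J)
    (hsin : ∀ x ∈ J, 0 < sin x) : AntitoneOn cos J :=
  antitoneOn_of_deriv_nonpos hJ Real.continuous_cos.continuousOn
    Real.differentiable_cos.differentiableOn fun x hx => by
      rw [Real.deriv_cos, neg_nonpos]
      exact (hsin x (interior_subset hx)).le

/-- `ψ(S)` is an interval on which `sin > 0`, and `cos` decreases on such an interval. -/
theorem IsPreconnected.lt_of_sin_pos_of_cos_pos_of_cos_neg {X : Type*} [TopologicalSpace X]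
    {S : Set X} (hS : IsPreconnected S) {ψ : X → ℝ} (hψ : ContinuousOn ψ S)
    (hsin : ∀ x ∈ S, 0 < sin (ψ x)) {a b : X} (ha : a ∈ S) (hb : b ∈ S)
    (hca : 0 < cos (ψ a)) (hcb : cos (ψ b) < 0) : ψ a < ψ b := by
  by_contra! hba
  have hsub : Icc (ψ b) (ψ a) ⊆ ψ '' S :=
    (hS.image ψ hψ).Icc_subset (mem_image_of_mem ψ hb) (mem_image_of_mem ψ ha)
  have hcos := Real.antitoneOn_cos_of_sin_pos (convex_Icc _ _)
    (fun y hy => by obtain ⟨x, hx, rfl⟩ := hsub hy; exact hsin x hx)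
    (left_mem_Icc.2 hba) (right_mem_Icc.2 hba) hba
  linarith

theorem not_continuousOn_of_square_boundary_signs {r R : ℝ} (hrR : r ≤ R) {θ : ℝ × ℝ → ℝ}
    (h1r : ∀ s ∈ Icc r R, 0 < cos (θ (r, s)))
    (h1R : ∀ s ∈ Icc r R, cos (θ (R, s)) < 0)
    (h2r : ∀ t ∈ Icc r R, 0 < sin (θ (t, r)))
    (h2R : ∀ t ∈ Icc r R, sin (θ (t, R)) < 0) :
    ¬ ContinuousOn θ (Icc r R ×ˢ Icc r R) := by
  intro hθ
  have hr : r ∈ Icc r R := left_mem_Icc.2 hrR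
  have hR : R ∈ Icc r R := right_mem_Icc.2 hrR
  have horiz : ∀ c ∈ Icc r R, IsPreconnected (Icc r R ×ˢ {c}) ∧ ContinuousOn θ (Icc r R ×ˢ {c}) :=
    fun c hc => ⟨isPreconnected_Icc.prod isPreconnected_singleton,
      hθ.mono (prod_mono subset_rfl (singleton_subset_iff.2 hc))⟩
  have vert : ∀ c ∈ Icc r R, IsPreconnected ({c} ×ˢ Icc r R) ∧ ContinuousOn θ ({c} ×ˢ Icc r R) :=
    fun c hc => ⟨isPreconnected_singleton.prod isPreconnected_Icc,
      hθ.mono (prod_mono (singleton_subset_iff.2 hc) subset_rfl)⟩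
  have bottom : θ (r, r) < θ (R, r) :=
    (horiz r hr).1.lt_of_sin_pos_of_cos_pos_of_cos_neg (horiz r hr).2
      (by rintro ⟨t, s⟩ ⟨ht, hs : s = _⟩; rw [hs]; exact h2r t ht)
      ⟨hr, rfl⟩ ⟨hR, rfl⟩ (h1r r hr) (h1R r hr)
  have right : θ (R, r) - π / 2 < θ (R, R) - π / 2 :=
    (vert R hR).1.lt_of_sin_pos_of_cos_pos_of_cos_neg (ψ := fun p => θ p - π / 2)
      ((vert R hR).2.sub continuousOn_const)
      (by rintro ⟨t, s⟩ ⟨ht : t = _, hs⟩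
          rw [ht, Real.sin_sub_pi_div_two]; exact neg_pos.2 (h1R s hs))
      ⟨rfl, hr⟩ ⟨rfl, hR⟩ (by rw [Real.cos_sub_pi_div_two]; exact h2r R hR)
      (by rw [Real.cos_sub_pi_div_two]; exact h2R R hR)
  have top : θ (R, R) - π < θ (r, R) - π :=
    (horiz R hR).1.lt_of_sin_pos_of_cos_pos_of_cos_neg (ψ := fun p => θ p - π)
      ((horiz R hR).2.sub continuousOn_const)
      (by rintro ⟨t, s⟩ ⟨ht, hs : s = _⟩
          rw [hs, Real.sin_sub_pi]; exact neg_pos.2 (h2R t ht))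
      ⟨hR, rfl⟩ ⟨hr, rfl⟩ (by rw [Real.cos_sub_pi]; exact neg_pos.2 (h1R R hR))
      (by rw [Real.cos_sub_pi]; exact neg_neg_iff_pos.2 (h1r R hR))
  have left : θ (r, R) + π / 2 < θ (r, r) + π / 2 :=
    (vert r hr).1.lt_of_sin_pos_of_cos_pos_of_cos_neg (ψ := fun p => θ p + π / 2)
      ((vert r hr).2.add continuousOn_const)
      (by rintro ⟨t, s⟩ ⟨ht : t = _, hs⟩; rw [ht, Real.sin_add_pi_div_two]; exact h1r s hs)
      ⟨rfl, hR⟩ ⟨rfl, hr⟩ (by rw [Real.cos_add_pi_div_two]; exact neg_pos.2 (h2R r hr))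
      (by rw [Real.cos_add_pi_div_two]; exact neg_neg_iff_pos.2 (h2r r hr))
  linarith

theorem stmt_11_general (r R : ℝ) (hrR : r < R)
    (H₁ H₂ : ℝ × ℝ → ℝ)
    (hc : ContinuousOn (fun p => (H₁ p, H₂ p)) (Set.Icc r R ×ˢ Set.Icc r R))
    (h1r : ∀ s ∈ Set.Icc r R, 0 < H₁ (r, s))
    (h1R : ∀ s ∈ Set.Icc r R, H₁ (R, s) < 0)
    (h2r : ∀ t ∈ Set.Icc r R, 0 < H₂ (t, r))
    (h2R : ∀ t ∈ Set.Icc r R, H₂ (t, R) < 0) :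
    ∃ p ∈ Set.Icc r R ×ˢ Set.Icc r R, H₁ p = 0 ∧ H₂ p = 0 := by
  by_contra! hne
  obtain ⟨L, hL, hexp⟩ := ((convex_Icc r R).prod (convex_Icc r R)).exists_continuousOn_exp_eq
    (Complex.equivRealProdCLM.symm.continuous.comp_continuousOn hc)
    fun p hp h => hne p hp (congrArg Complex.re h) (congrArg Complex.im h)
  have hr : r ∈ Icc r R := left_mem_Icc.2 hrR.le
  have hR : R ∈ Icc r R := right_mem_Icc.2 hrR.le
  refine not_continuousOn_of_square_boundary_signs hrR.le (θ := fun p => (L p).im)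
    (fun s hs => ?_) (fun s hs => ?_) (fun t ht => ?_) (fun t ht => ?_)
    (Complex.continuous_im.comp_continuousOn hL)
  · rw [← Complex.exp_re_pos_iff, hexp _ ⟨hr, hs⟩]; exact h1r s hs
  · rw [← Complex.exp_re_neg_iff, hexp _ ⟨hR, hs⟩]; exact h1R s hs
  · rw [← Complex.exp_im_pos_iff, hexp _ ⟨ht, hr⟩]; exact h2r t ht
  · rw [← Complex.exp_im_neg_iff, hexp _ ⟨ht, hR⟩]; exact h2R t ht

/-- Miranda's theorem in dimension 2: if `H = (H₁, H₂)` is continuous on the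
square `[r,R]²`, with `H₁ > 0` on the face `{r} × [r,R]`, `H₁ < 0` on
`{R} × [r,R]`, `H₂ > 0` on `[r,R] × {r}` and `H₂ < 0` on `[r,R] × {R}`,
then `H` vanishes somewhere in the square. -/
theorem stmt_11 (r R : ℝ) (hr : 0 < r) (hrR : r < R)
    (H₁ H₂ : ℝ × ℝ → ℝ)
    (hc : ContinuousOn (fun p => (H₁ p, H₂ p)) (Set.Icc r R ×ˢ Set.Icc r R))
    (h1r : ∀ s ∈ Set.Icc r R, 0 < H₁ (r, s))
    (h1R : ∀ s ∈ Set.Icc r R, H₁ (R, s) < 0)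
    (h2r : ∀ t ∈ Set.Icc r R, 0 < H₂ (t, r))
    (h2R : ∀ t ∈ Set.Icc r R, H₂ (t, R) < 0) :
    ∃ p ∈ Set.Icc r R ×ˢ Set.Icc r R, H₁ p = 0 ∧ H₂ p = 0 :=
  stmt_11_general r R hrR H₁ H₂ hc h1r h1R h2r h2R
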